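/- (Path characterization of safety.) M,s ⊨ ▲φ if and only if there exists a group assignment function f for M with f(s) ≠ ∅ such that φ is true at every state on every f-consistent path starting at s. Here a group assignment function is a map f : S → P(N) with f(t) ∈ N³ or f(t) = ∅ for all t, such that whenever i ∈ f(t) and t ∼_i t', then f(t') ≠ ∅; and an f-consistent path is a finite sequence s₀s₁…s_m with s_k ∼_a s_{k+1} for some a ∈ f(s_k) for each k < m. -/

import Mathlib

/-- An epistemic (Kripke) model over agent set `Agt` and state set `St`. -/
structure Model (Agt : Type) (St : Type) where
  rel : Agt → St → St → Prop
  val : ℕ → St → Prop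

/-- The model is an epistemic model proper: each agent's relation is an equivalence. -/
def isEquivModel {Agt St : Type} (M : Model Agt St) : Prop :=
  ∀ a, Equivalence (M.rel a)

/-- Formulas: atoms, ⊥, →, ∧, K_a, ▲ (safety), [φ⟡]ψ (pseudo-anonymous announcement),
    [φ⟡!]ψ (safe/intentional anonymous announcement). -/
inductive Form (Agt : Type) : Type where
  | atom : ℕ → Form Agt
  | bot  : Form Agt
  | imp  : Form Agt → Form Agt → Form Agt
  | and  : Form Agt → Form Agt → Form Agt
  | K    : Agt → Form Agt → Form Agt
  | tri  : Form Agt → Form Agt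
  | annA : Form Agt → Form Agt → Form Agt
  | annS : Form Agt → Form Agt → Form Agt

def Form.neg {Agt : Type} (φ : Form Agt) : Form Agt := .imp φ .bot

/-- One step of the safety operator: `⋁_{G ∈ N³} E_G (P ∧ X)`. -/
def fsafe {Agt St : Type} (M : Model Agt St) (P X : St → Prop) (s : St) : Prop :=
  ∃ G : Finset Agt, G.card = 3 ∧ ∀ a ∈ G, ∀ t, M.rel a s t → P t ∧ X t

/-- `▲P` semantically: greatest fixpoint of `fsafe M P`, i.e. union of post-fixed points. -/
def triSem {Agt St : Type} (M : Model Agt St) (P : St → Prop) (s : St) : Prop :=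
  ∃ X : St → Prop, X s ∧ ∀ t, X t → fsafe M P X t

/-- Product update of `M` with an action model whose events are `E`, relation `arel`, and
    (semantic) preconditions `pre`.  States not satisfying the precondition are cut off
    from the relation (this encodes the restriction to legal states). -/
def prodUpd {Agt St E : Type} (M : Model Agt St) (arel : Agt → E → E → Prop)
    (pre : E → St → Prop) : Model Agt (St × E) where
  rel c p q := pre p.2 p.1 ∧ pre q.2 q.1 ∧ M.rel c p.1 q.1 ∧ arel c p.2 q.2
  val n p := M.val n p.1

/-- Action relation of the pseudo-anonymous action model: `a ∼_c b` iff `(a = c ↔ b = c)`. -/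
def anonRel {Agt : Type} (c a b : Agt) : Prop := (a = c ↔ b = c)

/-- The pseudo-anonymous style update `M^{φ⟡}` (with precondition `pre a`). -/
def updA {Agt St : Type} (M : Model Agt St) (pre : Agt → St → Prop) : Model Agt (St × Agt) :=
  prodUpd M anonRel pre

/-- Satisfaction. -/
def Sat {Agt : Type} : {St : Type} → Model Agt St → St → Form Agt → Prop
  | _, M, s, .atom n => M.val n s
  | _, _, _, .bot => False
  | _, M, s, .imp φ ψ => Sat M s φ → Sat M s ψ
  | _, M, s, .and φ ψ => Sat M s φ ∧ Sat M s ψ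
  | _, M, s, .K a φ => ∀ t, M.rel a s t → Sat M t φ
  | _, M, s, .tri φ => triSem M (fun t => Sat M t φ) s
  | _, M, s, .annA φ ψ => ∀ a, (∀ t, M.rel a s t → Sat M t φ) →
      Sat (updA M (fun b t => ∀ u, M.rel b t u → Sat M u φ)) (s, a) ψ
  | _, M, s, .annS φ ψ => ∀ a, (∀ t, M.rel a s t → triSem M (fun u => Sat M u φ) t) →
      Sat (updA M (fun b t => ∀ u, M.rel b t u → triSem M (fun v => Sat M v φ) u)) (s, a) ψ

/-- The pseudo-anonymous update `M^{φ⟡}`. -/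
def updAnn {Agt St : Type} (M : Model Agt St) (φ : Form Agt) : Model Agt (St × Agt) :=
  updA M (fun b t => ∀ u, M.rel b t u → Sat M u φ)

/-- The safe (intentional) anonymous update `M^{φ⟡!}`. -/
def updSafe {Agt St : Type} (M : Model Agt St) (φ : Form Agt) : Model Agt (St × Agt) :=
  updA M (fun b t => ∀ u, M.rel b t u → triSem M (fun v => Sat M v φ) u)

/-- Public announcement update: restriction of `M` to `P` (encoded by cutting the relation). -/
def restrict {Agt St : Type} (M : Model Agt St) (P : St → Prop) : Model Agt St where
  rel a x y := P x ∧ P y ∧ M.rel a x y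
  val := M.val

/-- Iterative approximations `▲_n`. -/
def triN {Agt St : Type} (M : Model Agt St) (P : St → Prop) : ℕ → St → Prop
  | 0 => P
  | n + 1 => fun s => P s ∧ ∃ G : Finset Agt, G.card = 3 ∧
      ∀ a ∈ G, ∀ t, M.rel a s t → triN M P n t

/-- Standard bisimulation between two models. -/
structure Bisim {Agt St₁ St₂ : Type} (M₁ : Model Agt St₁) (M₂ : Model Agt St₂)
    (Z : St₁ → St₂ → Prop) : Prop where
  atoms : ∀ s t, Z s t → ∀ n, (M₁.val n s ↔ M₂.val n t)
  forth : ∀ s t, Z s t → ∀ a u, M₁.rel a s u → ∃ v, M₂.rel a t v ∧ Z u v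
  back  : ∀ s t, Z s t → ∀ a v, M₂.rel a t v → ∃ u, M₁.rel a s u ∧ Z u v

/-- `f` is a group assignment function for `M`. -/
def GroupAssign {Agt St : Type} (M : Model Agt St) (f : St → Finset Agt) : Prop :=
  (∀ t, f t = ∅ ∨ (f t).card = 3) ∧
  (∀ t t' i, i ∈ f t → M.rel i t t' → f t' ≠ ∅)

/-- `σ : Fin (m+1) → St` is an `f`-consistent path. -/
def FPath {Agt St : Type} (M : Model Agt St) (f : St → Finset Agt) (m : ℕ)
    (σ : Fin (m + 1) → St) : Prop :=
  ∀ k : Fin m, ∃ a ∈ f (σ k.castSucc), M.rel a (σ k.castSucc) (σ k.succ)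

/-!
A post-fixed point `X` of `fsafe M P` yields a group assignment by picking, at each state of `X`,
a witnessing triple of agents (and `∅` outside `X`); every state reachable along such a
group-labelled step stays in `X`, and reflexivity of the relations puts `X` inside `P`.
Conversely, for a group assignment `f`, the states with `f t ≠ ∅` that are reachable from `s`
form a post-fixed point. Consistent paths are just the finite witnesses of reachability.
-/

open Relation

def FStep {Agt St : Type} (M : Model Agt St) (f : St → Finset Agt) (t u : St) : Prop :=
  ∃ a ∈ f t, M.rel a t u

section Paths

variable {Agt St : Type} {M : Model Agt St} {f : St → Finset Agt}

theorem FPath.reflTransGen {m : ℕ} {σ : Fin (m + 1) → St} (hσ : FPath M f m σ)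
    (k : Fin (m + 1)) : ReflTransGen (FStep M f) (σ 0) (σ k) := by
  induction k using Fin.induction with
  | zero => exact .refl
  | succ k ih => exact ih.tail (hσ k)

theorem FPath.snoc {m : ℕ} {σ : Fin (m + 1) → St} {u : St} (hσ : FPath M f m σ)
    (hu : FStep M f (σ (Fin.last m)) u) : FPath M f (m + 1) (Fin.snoc σ u) := by
  intro k
  induction k using Fin.lastCases with
  | last =>
    show FStep M f _ _
    simpa only [Fin.succ_last, Fin.snoc_castSucc, Fin.snoc_last] using hu
  | cast j => simpa only [Fin.succ_castSucc, Fin.snoc_castSucc] using hσ j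

theorem exists_fPath_of_reflTransGen {s t : St} (h : ReflTransGen (FStep M f) s t) :
    ∃ (m : ℕ) (σ : Fin (m + 1) → St), σ 0 = s ∧ FPath M f m σ ∧ σ (Fin.last m) = t := by
  induction h with
  | refl => exact ⟨0, fun _ => s, rfl, fun k => k.elim0, rfl⟩
  | tail _ hstep ih =>
    obtain ⟨m, σ, h0, hσ, hlast⟩ := ih
    refine ⟨m + 1, Fin.snoc σ _, ?_, hσ.snoc (hlast ▸ hstep), Fin.snoc_last ..⟩
    simpa only [← Fin.castSucc_zero, Fin.snoc_castSucc] using h0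

theorem forall_fPath_iff_forall_reflTransGen (s : St) (P : St → Prop) :
    (∀ (m : ℕ) (σ : Fin (m + 1) → St), σ 0 = s → FPath M f m σ → ∀ k, P (σ k)) ↔
      ∀ t, ReflTransGen (FStep M f) s t → P t := by
  constructor
  · intro hP t ht
    obtain ⟨m, σ, h0, hσ, rfl⟩ := exists_fPath_of_reflTransGen ht
    exact hP m σ h0 hσ _
  · rintro hP m σ rfl hσ k
    exact hP _ (hσ.reflTransGen k)

end Paths

section Safety

variable {Agt St : Type} {M : Model Agt St} {P : St → Prop}

theorem GroupAssign.triSem {f : St → Finset Agt} (hf : GroupAssign M f) {s : St}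
    (hfs : f s ≠ ∅) (hP : ∀ t, ReflTransGen (FStep M f) s t → P t) : triSem M P s := by
  refine ⟨fun t => f t ≠ ∅ ∧ ReflTransGen (FStep M f) s t, ⟨hfs, .refl⟩, ?_⟩
  rintro t ⟨hft, hst⟩
  refine ⟨f t, (hf.1 t).resolve_left hft, fun a ha u hu => ?_⟩
  have hsu : ReflTransGen (FStep M f) s u := hst.tail ⟨a, ha, hu⟩
  exact ⟨hP u hsu, hf.2 t u a ha hu, hsu⟩

theorem exists_groupAssign_of_triSem (hrefl : ∀ a t, M.rel a t t) {s : St}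
    (hs : triSem M P s) :
    ∃ f : St → Finset Agt, GroupAssign M f ∧ f s ≠ ∅ ∧
      ∀ t, ReflTransGen (FStep M f) s t → P t := by
  classical
  obtain ⟨X, hXs, hpost⟩ := hs
  choose G hG3 hG using hpost
  let f : St → Finset Agt := fun t => if h : X t then G t h else ∅
  have hf : ∀ t (h : X t), f t = G t h := fun t h => dif_pos h
  have hf_ne : ∀ t, X t → f t ≠ ∅ := fun t h => by
    rw [hf t h, ← Finset.nonempty_iff_ne_empty, ← Finset.card_pos, hG3 t h]
    norm_num
  have hf_step : ∀ t u, FStep M f t u → P u ∧ X u := fun t u ⟨a, ha, hu⟩ => by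
    by_cases h : X t
    · rw [hf t h] at ha
      exact hG t h a ha u hu
    · simp [f, h] at ha
  refine ⟨f, ⟨fun t => ?_, fun t u a ha hu => hf_ne u (hf_step t u ⟨a, ha, hu⟩).2⟩,
    hf_ne s hXs, fun t hst => ?_⟩
  · by_cases h : X t
    · exact .inr (hf t h ▸ hG3 t h)
    · exact .inl (dif_neg h)
  · have hXt : X t := by
      induction hst with
      | refl => exact hXs
      | tail _ hstep _ => exact (hf_step _ _ hstep).2
    obtain ⟨a, ha⟩ := Finset.nonempty_iff_ne_empty.mpr (hf_ne t hXt)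
    exact (hf_step t t ⟨a, ha, hrefl a t⟩).1

theorem triSem_iff_exists_groupAssign (hrefl : ∀ a t, M.rel a t t) (s : St) :
    triSem M P s ↔ ∃ f : St → Finset Agt, GroupAssign M f ∧ f s ≠ ∅ ∧
      ∀ t, ReflTransGen (FStep M f) s t → P t :=
  ⟨exists_groupAssign_of_triSem hrefl, fun ⟨_, hf, hfs, hP⟩ => hf.triSem hfs hP⟩

end Safety

theorem stmt12 {Agt St : Type} (M : Model Agt St) (hM : isEquivModel M)
    (s : St) (φ : Form Agt) :
    Sat M s (.tri φ) ↔
      ∃ f : St → Finset Agt, GroupAssign M f ∧ f s ≠ ∅ ∧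
        ∀ (m : ℕ) (σ : Fin (m + 1) → St), σ 0 = s → FPath M f m σ →
          ∀ k : Fin (m + 1), Sat M (σ k) φ := by
  rw [Sat, triSem_iff_exists_groupAssign (fun a => (hM a).refl) s]
  exact exists_congr fun f => and_congr_right' <| and_congr_right'
    (forall_fPath_iff_forall_reflTransGen s _).symm
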